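/- Let N ≥ 2 be even, k ≥ 0, and let Γ = {γ_1, …, γ_N} be a multiset of complex numbers invariant under negation. Fix θ ∈ Γ with θ either a positive real number or θ = iβ, β ∈ [0,π) (so −θ ∈ Γ as well), and let Γ' denote Γ with one copy of θ and one copy of −θ removed. Define B̃_N(z) := z^{−N/2}·∏_{γ∈Γ}(e^{γ/2^{k+1}}z + 1), B̃_{N−2}(z) := z^{−(N−2)/2}·∏_{γ∈Γ'}(e^{γ/2^{k+1}}z + 1), and w := e^{−θ/2^{k+1}}. Assume D := (e^{−θ/2^{k+1}} + e^{θ/2^{k+1}})·B̃_{N−2}(e^{θ/2^{k+1}}) ≠ 0. Then D⁻¹·B̃_N(w) = 2 and D⁻¹·B̃_N(w⁻¹) = 2; that is, with normalization factor K = D⁻¹ the normalized exponential B-spline symbol K·B̃_N satisfies the conditions for reproduction of {e^{θx}, e^{−θx}} with shift parameter p = 0. -/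

import Mathlib

/-!
Write `u = e^{θ/2^{k+1}}`, so `w = u⁻¹`. Splitting off the factors for `±θ` gives
`B̃_N(z) = z⁻¹ (u z + 1)(u⁻¹ z + 1) B̃_{N-2}(z)`, and at `z = u^{±1}` the quadratic part equals
`2 (u + u⁻¹)`. Since `Γ'` is symmetric, `∏_{γ ∈ Γ'} e^{γ/2^{k+1}} = e^{ΣΓ'/2^{k+1}} = 1`, which
makes `B̃_{N-2}` invariant under `z ↦ z⁻¹`; hence both values of `B̃_N` equal `2D`.
-/

open Complex

/-- The `k`-level symbol of the (not-normalized) exponential B-spline associated with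
the multiset `Γ`: `z^E · ∏_{γ ∈ Γ} (e^{γ/2^{k+1}} z + 1)`. -/
noncomputable def expBSplineSymbol (k : ℕ) (E : ℤ) (Γ : Multiset ℂ) (z : ℂ) : ℂ :=
  z ^ E * (Γ.map (fun γ => Complex.exp (γ / 2 ^ (k + 1)) * z + 1)).prod

theorem Multiset.sum_eq_zero_of_map_neg_eq {R : Type*} [NonAssocRing R] [NoZeroDivisors R]
    [CharZero R] {s : Multiset R} (hs : s.map (fun x : R => -x) = s) : s.sum = 0 := by
  rw [← CharZero.neg_eq_self_iff, ← Multiset.sum_map_neg', hs]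

theorem Multiset.map_neg_eq_of_cons_neg_cons {R : Type*} [InvolutiveNeg R] {a : R}
    {s : Multiset R} (hs : (a ::ₘ -a ::ₘ s).map (fun x : R => -x) = a ::ₘ -a ::ₘ s) :
    s.map (fun x : R => -x) = s := by
  rwa [Multiset.map_cons, Multiset.map_cons, neg_neg, Multiset.cons_swap,
    Multiset.cons_inj_right, Multiset.cons_inj_right] at hs

theorem expBSplineSymbol_cons (k : ℕ) (E : ℤ) (γ : ℂ) (Γ : Multiset ℂ) (z : ℂ) :
    expBSplineSymbol k E (γ ::ₘ Γ) z =
      (exp (γ / 2 ^ (k + 1)) * z + 1) * expBSplineSymbol k E Γ z := by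
  simp only [expBSplineSymbol, Multiset.map_cons, Multiset.prod_cons]
  ring

theorem Multiset.prod_map_exp_div_eq_one {Γ : Multiset ℂ}
    (hsym : Γ.map (fun x : ℂ => -x) = Γ) (c : ℂ) :
    (Γ.map fun γ => exp (γ / c)).prod = 1 := by
  rw [show (Γ.map fun γ => exp (γ / c)) = (Γ.map (· / c)).map exp from
    (Multiset.map_map _ _ _).symm, ← exp_multiset_sum, Multiset.sum_map_div, Multiset.map_id',
    Multiset.sum_eq_zero_of_map_neg_eq hsym, zero_div, exp_zero]

theorem expBSplineSymbol_inv (k m : ℕ) {Γ : Multiset ℂ}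
    (hsym : Γ.map (fun x : ℂ => -x) = Γ) (hcard : Multiset.card Γ = 2 * m) (z : ℂ) :
    expBSplineSymbol k (-m) Γ z⁻¹ = expBSplineSymbol k (-m) Γ z := by
  rcases eq_or_ne z 0 with rfl | hz
  · rw [inv_zero]
  simp only [expBSplineSymbol, zpow_neg, zpow_natCast, inv_pow]
  set c : ℂ := 2 ^ (k + 1)
  have hfactor : ∀ γ, exp (γ / c) * z⁻¹ + 1 =
      (exp (γ / c) * z⁻¹) * (exp (-γ / c) * z + 1) := fun γ => by
    have hexp : exp (γ / c) * exp (-γ / c) = 1 := by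
      rw [← exp_add, neg_div, add_neg_cancel, exp_zero]
    linear_combination (-(z⁻¹ * z)) * hexp - inv_mul_cancel₀ hz
  have hprod : (Γ.map fun γ => exp (γ / c) * z⁻¹ + 1).prod =
      z⁻¹ ^ (2 * m) * (Γ.map fun γ => exp (γ / c) * z + 1).prod := by
    conv_rhs => rw [← hsym, Multiset.map_map]
    simp_rw [hfactor, Multiset.prod_map_mul, Multiset.prod_map_exp_div_eq_one hsym c,
      Multiset.map_const', Multiset.prod_replicate, hcard, one_mul]
    rfl
  rw [inv_inv, hprod, ← mul_assoc, two_mul, pow_add, ← mul_assoc, ← mul_pow,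
    mul_inv_cancel₀ hz, one_pow, one_mul, inv_pow]

theorem expBSplineSymbol_cons_neg_cons_exp (k : ℕ) (E : ℤ) (θ : ℂ) (Γ : Multiset ℂ) :
    expBSplineSymbol k (E - 1) (θ ::ₘ -θ ::ₘ Γ) (exp (θ / 2 ^ (k + 1))) =
      2 * (exp (-θ / 2 ^ (k + 1)) + exp (θ / 2 ^ (k + 1))) *
        expBSplineSymbol k E Γ (exp (θ / 2 ^ (k + 1))) := by
  set u := exp (θ / 2 ^ (k + 1))
  have hu : u ≠ 0 := exp_ne_zero _
  have hwu : exp (-θ / 2 ^ (k + 1)) = u⁻¹ := by rw [neg_div, exp_neg]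
  rw [expBSplineSymbol_cons, expBSplineSymbol_cons, hwu, expBSplineSymbol, expBSplineSymbol,
    zpow_sub_one₀ hu]
  field_simp
  ring

theorem expBSplineSymbol_cons_neg_cons_exp_neg (k : ℕ) (E : ℤ) (θ : ℂ) (Γ : Multiset ℂ) :
    expBSplineSymbol k (E - 1) (θ ::ₘ -θ ::ₘ Γ) (exp (-θ / 2 ^ (k + 1))) =
      2 * (exp (-θ / 2 ^ (k + 1)) + exp (θ / 2 ^ (k + 1))) *
        expBSplineSymbol k E Γ (exp (-θ / 2 ^ (k + 1))) := by
  simpa only [neg_neg, Multiset.cons_swap (-θ), add_comm (exp (θ / _))] using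
    expBSplineSymbol_cons_neg_cons_exp k E (-θ) Γ

theorem normalized_expBSpline_reproduction_even_general (N k : ℕ) (hNeven : Even N)
    (θ : ℂ)
    (Γ Γ' : Multiset ℂ)
    (hcard : Multiset.card Γ = N)
    (hsym : Γ.map (fun x : ℂ => -x) = Γ)
    (hsplit : Γ = θ ::ₘ (-θ) ::ₘ Γ')
    (D : ℂ)
    (hDdef : D = (exp (-θ / 2 ^ (k + 1)) + exp (θ / 2 ^ (k + 1))) *
      expBSplineSymbol k (-(((N - 2) / 2 : ℕ) : ℤ)) Γ' (exp (θ / 2 ^ (k + 1))))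
    (hD : D ≠ 0) :
    D⁻¹ * expBSplineSymbol k (-((N / 2 : ℕ) : ℤ)) Γ (exp (-θ / 2 ^ (k + 1))) = 2 ∧
    D⁻¹ * expBSplineSymbol k (-((N / 2 : ℕ) : ℤ)) Γ (exp (-θ / 2 ^ (k + 1)))⁻¹ = 2 := by
  subst hsplit
  have hsym' : Γ'.map (fun x : ℂ => -x) = Γ' := Multiset.map_neg_eq_of_cons_neg_cons hsym
  simp only [Multiset.card_cons] at hcard
  obtain ⟨m, hm⟩ : ∃ m, Multiset.card Γ' = 2 * m := by
    obtain ⟨n, hn⟩ := hNeven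
    exact ⟨n - 1, by omega⟩
  have hE : -((N / 2 : ℕ) : ℤ) = -(m : ℤ) - 1 := by omega
  have hE' : (N - 2) / 2 = m := by omega
  rw [hE'] at hDdef
  have hvalue : expBSplineSymbol k (-(m : ℤ) - 1) (θ ::ₘ -θ ::ₘ Γ')
      (exp (-θ / 2 ^ (k + 1))) = 2 * D := by
    rw [expBSplineSymbol_cons_neg_cons_exp_neg, hDdef, ← expBSplineSymbol_inv k m hsym' hm,
      neg_div, exp_neg, inv_inv, mul_assoc]
  have hvalue_inv : expBSplineSymbol k (-(m : ℤ) - 1) (θ ::ₘ -θ ::ₘ Γ')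
      (exp (-θ / 2 ^ (k + 1)))⁻¹ = 2 * D := by
    rw [neg_div, exp_neg, inv_inv, expBSplineSymbol_cons_neg_cons_exp, hDdef, mul_assoc]
  rw [hE, hvalue, hvalue_inv, mul_left_comm, inv_mul_cancel₀ hD, mul_one]
  exact ⟨rfl, rfl⟩

/-- Even-order case: with the normalization factor `K = D⁻¹`, the normalized exponential
B-spline symbol satisfies the conditions for reproduction of `{e^{θx}, e^{-θx}}` with
shift parameter `p = 0`, i.e. it takes the value `2` at `w = e^{-θ/2^{k+1}}` and at `w⁻¹`. -/
theorem normalized_expBSpline_reproduction_even (N k : ℕ) (hN : 2 ≤ N) (hNeven : Even N)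
    (θ : ℂ)
    (hθ : (∃ t : ℝ, 0 < t ∧ θ = (t : ℂ)) ∨
          (∃ β : ℝ, 0 ≤ β ∧ β < Real.pi ∧ θ = (β : ℂ) * I))
    (Γ Γ' : Multiset ℂ)
    (hcard : Multiset.card Γ = N)
    (hsym : Γ.map (fun x : ℂ => -x) = Γ)
    (hsplit : Γ = θ ::ₘ (-θ) ::ₘ Γ')
    (D : ℂ)
    (hDdef : D = (exp (-θ / 2 ^ (k + 1)) + exp (θ / 2 ^ (k + 1))) *
      expBSplineSymbol k (-(((N - 2) / 2 : ℕ) : ℤ)) Γ' (exp (θ / 2 ^ (k + 1))))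
    (hD : D ≠ 0) :
    D⁻¹ * expBSplineSymbol k (-((N / 2 : ℕ) : ℤ)) Γ (exp (-θ / 2 ^ (k + 1))) = 2 ∧
    D⁻¹ * expBSplineSymbol k (-((N / 2 : ℕ) : ℤ)) Γ (exp (-θ / 2 ^ (k + 1)))⁻¹ = 2 :=
  normalized_expBSpline_reproduction_even_general N k hNeven θ Γ Γ' hcard hsym hsplit D hDdef hD
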